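/- arXiv:1812.08340 — 2 statements merged into one kernel-verified Lean document; each statement's English description precedes it below -/
import Mathlib

section
/- Quasi-Pythagoras inequality: let a be a symmetric bilinear form with continuity constant C_cont and coercivity constant C_coer relative to a norm ‖·‖, and suppose a(e_*, W) = 0 for all W in a subspace containing E⁰. Write e_* + E⁰ = e − E⊥ with E⁰ = E − E⊥ where E = e − e_*. Then for every δ > 0: a(e_*, e_*) ≤ (1+δ) a(e,e) − (C_coer/2)‖E‖² + C₅(1 + 1/δ)‖E⊥‖², where C₅ = max(C_coer + C_cont, C_cont²/C_coer). -/
/-!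
Expanding `a(e_* + E⁰, e_* + E⁰) = a(e - E⊥, e - E⊥)` and using `a(e_*, E⁰) = 0` gives
`a(e_*, e_*) = a(e, e) - 2 a(e, E⊥) + a(E⊥, E⊥) - a(E⁰, E⁰)`. Young's inequality with weight
`δ C_coer` absorbs the cross term into `δ a(e, e)`, continuity bounds `a(E⊥, E⊥)`, and coercivity
together with `‖E⁰‖² ≥ ‖E‖²/2 - ‖E⊥‖²` turns `-a(E⁰, E⁰)` into the gain `-(C_coer/2)‖E‖²`.
-/

namespace LinearMap.BilinForm

theorem apply_self_add_apply_self_of_add_eq_sub {R M : Type*} [CommRing R] [AddCommGroup M]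
    [Module R M] {B : LinearMap.BilinForm R M} (hB : ∀ v w, B v w = B w v) {x y z w : M}
    (hxy : B x y = 0) (h : x + y = z - w) :
    B x x + B y y = B z z - 2 * B z w + B w w := by
  have hsq := congrArg (fun v => B v v) h
  simp only [map_add, map_sub, LinearMap.add_apply, LinearMap.sub_apply] at hsq
  rw [hB y x, hxy, hB w z] at hsq
  linear_combination hsq

theorem neg_two_mul_apply_le {H : Type*} [SeminormedAddCommGroup H] [Module ℝ H]
    (a : LinearMap.BilinForm ℝ H) {Ccont Ccoer δ : ℝ} (hCcoer : 0 < Ccoer) (hδ : 0 < δ) {v w : H}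
    (hcont : |a v w| ≤ Ccont * ‖v‖ * ‖w‖) (hcoer : Ccoer * ‖v‖ ^ 2 ≤ a v v) :
    -(2 * a v w) ≤ δ * a v v + Ccont ^ 2 / Ccoer / δ * ‖w‖ ^ 2 :=
  calc -(2 * a v w)
    _ ≤ 2 * ‖v‖ * (Ccont * ‖w‖) := by linarith [neg_abs_le (a v w)]
    _ ≤ δ * Ccoer * ‖v‖ ^ 2 + (δ * Ccoer)⁻¹ * (Ccont * ‖w‖) ^ 2 :=
      two_mul_le_add_mul_sq (mul_pos hδ hCcoer)
    _ = δ * (Ccoer * ‖v‖ ^ 2) + Ccont ^ 2 / Ccoer / δ * ‖w‖ ^ 2 := by field_simp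
    _ ≤ δ * a v v + Ccont ^ 2 / Ccoer / δ * ‖w‖ ^ 2 := by gcongr

end LinearMap.BilinForm

theorem norm_sq_div_two_sub_norm_sq_le {E : Type*} [SeminormedAddCommGroup E] (x y : E) :
    ‖x‖ ^ 2 / 2 - ‖y‖ ^ 2 ≤ ‖x - y‖ ^ 2 := by
  have h := (pow_le_pow_left₀ (norm_nonneg x) (norm_le_norm_sub_add x y) 2).trans add_sq_le
  linarith

theorem stmt_13_general {H : Type*} [NormedAddCommGroup H] [NormedSpace ℝ H]
    (a : LinearMap.BilinForm ℝ H) (hsymm : ∀ v w, a v w = a w v)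
    (Ccont Ccoer C₅ : ℝ) (hCcoer : 0 < Ccoer)
    (hcont : ∀ v w : H, |a v w| ≤ Ccont * ‖v‖ * ‖w‖)
    (hcoer : ∀ v : H, Ccoer * ‖v‖ ^ 2 ≤ a v v)
    (hC₅ : C₅ = max (Ccoer + Ccont) (Ccont ^ 2 / Ccoer))
    (X0 : Submodule ℝ H)
    (u U Ustar E E0 Ep : H)
    (hE : E = (u - U) - (u - Ustar)) (hE0 : E0 = E - Ep) (hE0mem : E0 ∈ X0)
    (hgal : ∀ W ∈ X0, a (u - Ustar) W = 0) :
    ∀ δ > 0, a (u - Ustar) (u - Ustar) ≤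
      (1 + δ) * a (u - U) (u - U) - (Ccoer / 2) * ‖E‖ ^ 2
        + C₅ * (1 + 1 / δ) * ‖Ep‖ ^ 2 := by
  intro δ hδ
  have hpyth := LinearMap.BilinForm.apply_self_add_apply_self_of_add_eq_sub hsymm (hgal E0 hE0mem)
    (show u - Ustar + E0 = u - U - Ep by rw [hE0, hE]; abel)
  have hcross :=
    LinearMap.BilinForm.neg_two_mul_apply_le a hCcoer hδ (hcont (u - U) Ep) (hcoer (u - U))
  have hEp : a Ep Ep ≤ Ccont * ‖Ep‖ ^ 2 :=
    (le_abs_self _).trans ((hcont Ep Ep).trans_eq (by ring))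
  have hcoerE0 : Ccoer * (‖E‖ ^ 2 / 2 - ‖Ep‖ ^ 2) ≤ a E0 E0 :=
    (mul_le_mul_of_nonneg_left (hE0 ▸ norm_sq_div_two_sub_norm_sq_le E Ep) hCcoer.le).trans
      (hcoer E0)
  have hcoef : Ccont + Ccoer + Ccont ^ 2 / Ccoer / δ ≤ C₅ * (1 + 1 / δ) := by
    rw [mul_add, mul_one, mul_one_div, hC₅]
    gcongr
    · exact le_max_of_le_left (add_comm _ _).le
    · exact le_max_right _ _
  linarith [mul_le_mul_of_nonneg_right hcoef (sq_nonneg ‖Ep‖)]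

/-- Quasi-Pythagoras inequality for the inconsistent Nitsche method. -/
theorem stmt_13 {H : Type*} [NormedAddCommGroup H] [NormedSpace ℝ H]
    (a : LinearMap.BilinForm ℝ H) (hsymm : ∀ v w, a v w = a w v)
    (Ccont Ccoer C₅ : ℝ) (hCcoer : 0 < Ccoer) (hCcont : Ccoer ≤ Ccont)
    (hcont : ∀ v w : H, |a v w| ≤ Ccont * ‖v‖ * ‖w‖)
    (hcoer : ∀ v : H, Ccoer * ‖v‖ ^ 2 ≤ a v v)
    (hC₅ : C₅ = max (Ccoer + Ccont) (Ccont ^ 2 / Ccoer))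
    (X0 : Submodule ℝ H)
    (u U Ustar E E0 Ep : H)
    (hE : E = (u - U) - (u - Ustar)) (hE0 : E0 = E - Ep) (hE0mem : E0 ∈ X0)
    (hgal : ∀ W ∈ X0, a (u - Ustar) W = 0) :
    ∀ δ > 0, a (u - Ustar) (u - Ustar) ≤
      (1 + δ) * a (u - U) (u - U) - (Ccoer / 2) * ‖E‖ ^ 2
        + C₅ * (1 + 1 / δ) * ‖Ep‖ ^ 2 :=
  stmt_13_general a hsymm Ccont Ccoer C₅ hCcoer hcont hcoer hC₅ X0 u U Ustar E E0 Ep hE hE0 hE0mem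
    hgal
end

section
/- Optimal marking lemma (abstract): let C_eff, C_dRel, γ > 0 with γ ≥ 2C_dRel/C_eff, θ_*² = (C_eff − 2C_dRel/γ)/(2(1+C_dRel)) > 0, and μ(θ,γ) = (1/2)(1 − 2C_dRel/(γ C_eff))(1 − θ²/θ_*²) for θ ∈ (0, θ_*). Suppose nonnegative reals satisfy: ρ_*² ≤ μ ρ² (total error reduction), C_eff η² ≤ ρ² (efficiency), ρ² − 2ρ_*² ≤ 2C_dRel(η_R² + γ⁻¹η²) + 2η_R² (discrete reliability plus oscillation dominance, with η_R the estimator restricted to refined cells, η_R ≤ η). Then η_R² ≥ θ² η². -/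
/-!
Writing `A := 1 - 2 C_dRel / (γ C_eff)` and `B := 1 - θ² / θ_*²`, we have `2μ = A B`,
`C_eff A = C_eff - 2 C_dRel / γ = 2 (1 + C_dRel) θ_*²` and hence
`(1 - 2μ) C_eff - 2 C_dRel / γ = C_eff A (1 - B) = 2 (1 + C_dRel) θ²`.
Since `0 ≤ A ≤ 1` and `B ≤ 1`, also `2μ ≤ 1`, so the error reduction and the efficiency give
`(1 - 2μ) C_eff η² ≤ ρ² - 2ρ_*²`; the discrete reliability bounds the right-hand side by
`2 (1 + C_dRel) η_R² + (2 C_dRel / γ) η²`, and subtracting the oscillation term leaves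
`2 (1 + C_dRel) θ² η² ≤ 2 (1 + C_dRel) η_R²`.
-/

namespace OptimalMarking

variable {Ceff CdRel γ θs θ μ : ℝ}

lemma mul_one_sub_div_eq_sq (hCeff : 0 < Ceff) (hCdRel : 0 < CdRel) (hγ : 0 < γ)
    (hθs : θs ^ 2 = (Ceff - 2 * CdRel / γ) / (2 * (1 + CdRel))) :
    Ceff * (1 - 2 * CdRel / (γ * Ceff)) = 2 * (1 + CdRel) * θs ^ 2 := by
  rw [hθs]
  field_simp

lemma two_mul_le_one (hCeff : 0 < Ceff) (hCdRel : 0 < CdRel) (hγ : 0 < γ)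
    (hθs : θs ^ 2 = (Ceff - 2 * CdRel / γ) / (2 * (1 + CdRel)))
    (hμ : μ = (1 / 2) * (1 - 2 * CdRel / (γ * Ceff)) * (1 - θ ^ 2 / θs ^ 2)) :
    2 * μ ≤ 1 := by
  set A := 1 - 2 * CdRel / (γ * Ceff)
  have hA_nonneg : 0 ≤ A := by
    refine nonneg_of_mul_nonneg_right ?_ hCeff
    rw [mul_one_sub_div_eq_sq hCeff hCdRel hγ hθs]
    positivity
  have hA_le_one : A ≤ 1 := sub_le_self _ (by positivity)
  have hB_le_one : 1 - θ ^ 2 / θs ^ 2 ≤ 1 := sub_le_self _ (by positivity)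
  calc 2 * μ = A * (1 - θ ^ 2 / θs ^ 2) := by rw [hμ]; ring
    _ ≤ A := mul_le_of_le_one_right hA_nonneg hB_le_one
    _ ≤ 1 := hA_le_one

lemma one_sub_two_mul_mul_sub_eq (hCeff : 0 < Ceff) (hCdRel : 0 < CdRel) (hγ : 0 < γ)
    (hθs : θs ^ 2 = (Ceff - 2 * CdRel / γ) / (2 * (1 + CdRel))) (hθspos : 0 < θs)
    (hμ : μ = (1 / 2) * (1 - 2 * CdRel / (γ * Ceff)) * (1 - θ ^ 2 / θs ^ 2)) :
    (1 - 2 * μ) * Ceff - 2 * CdRel / γ = 2 * (1 + CdRel) * θ ^ 2 := by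
  have hA := mul_one_sub_div_eq_sq hCeff hCdRel hγ hθs
  calc (1 - 2 * μ) * Ceff - 2 * CdRel / γ
      = Ceff * (1 - 2 * CdRel / (γ * Ceff)) * (θ ^ 2 / θs ^ 2) := by
        rw [hμ]; field_simp; ring
    _ = 2 * (1 + CdRel) * θ ^ 2 := by
        rw [hA]; field_simp

lemma one_sub_two_mul_mul_le_sub_two_mul {Ceff μ ρ ρstar η : ℝ} (hμ : 2 * μ ≤ 1)
    (hreduce : ρstar ^ 2 ≤ μ * ρ ^ 2) (heff : Ceff * η ^ 2 ≤ ρ ^ 2) :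
    (1 - 2 * μ) * (Ceff * η ^ 2) ≤ ρ ^ 2 - 2 * ρstar ^ 2 := by
  nlinarith [mul_le_mul_of_nonneg_left heff (sub_nonneg.mpr hμ)]

lemma mul_le_of_mul_le_add_mul {c a K t x y : ℝ} (hK : 0 < K) (hc : c - a = K * t)
    (h : c * x ≤ K * y + a * x) : t * x ≤ y := by
  refine le_of_mul_le_mul_left ?_ hK
  linear_combination h - x * hc

end OptimalMarking

theorem stmt_15_general (Ceff CdRel γ θs θ μ ρ ρstar η ηR : ℝ)
    (hCeff : 0 < Ceff) (hCdRel : 0 < CdRel) (hγ : 0 < γ)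
    (hθs : θs ^ 2 = (Ceff - 2 * CdRel / γ) / (2 * (1 + CdRel)))
    (hθspos : 0 < θs)
    (hμ : μ = (1 / 2) * (1 - 2 * CdRel / (γ * Ceff)) * (1 - θ ^ 2 / θs ^ 2))
    (hreduce : ρstar ^ 2 ≤ μ * ρ ^ 2)
    (heff : Ceff * η ^ 2 ≤ ρ ^ 2)
    (hdrel : ρ ^ 2 - 2 * ρstar ^ 2 ≤ 2 * CdRel * (ηR ^ 2 + γ⁻¹ * η ^ 2) + 2 * ηR ^ 2) :
    θ ^ 2 * η ^ 2 ≤ ηR ^ 2 := by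
  have hμ_le := OptimalMarking.two_mul_le_one hCeff hCdRel hγ hθs hμ
  have hkey := OptimalMarking.one_sub_two_mul_mul_sub_eq hCeff hCdRel hγ hθs hθspos hμ
  have hlower := OptimalMarking.one_sub_two_mul_mul_le_sub_two_mul hμ_le hreduce heff
  refine OptimalMarking.mul_le_of_mul_le_add_mul (by positivity) hkey ?_
  calc ((1 - 2 * μ) * Ceff) * η ^ 2 = (1 - 2 * μ) * (Ceff * η ^ 2) := by ring
    _ ≤ ρ ^ 2 - 2 * ρstar ^ 2 := hlower
    _ ≤ 2 * CdRel * (ηR ^ 2 + γ⁻¹ * η ^ 2) + 2 * ηR ^ 2 := hdrel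
    _ = 2 * (1 + CdRel) * ηR ^ 2 + 2 * CdRel / γ * η ^ 2 := by ring

/-- Optimal marking lemma (abstract form): the refined-region estimator satisfies
the Dörfler property `η_R² ≥ θ² η²`. -/
theorem stmt_15 (Ceff CdRel γ θs θ μ ρ ρstar η ηR : ℝ)
    (hCeff : 0 < Ceff) (hCdRel : 0 < CdRel) (hγ : 0 < γ)
    (hγbig : 2 * CdRel / Ceff ≤ γ)
    (hθs : θs ^ 2 = (Ceff - 2 * CdRel / γ) / (2 * (1 + CdRel)))
    (hθspos : 0 < θs)
    (hθ : θ ∈ Set.Ioo (0 : ℝ) θs)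
    (hμ : μ = (1 / 2) * (1 - 2 * CdRel / (γ * Ceff)) * (1 - θ ^ 2 / θs ^ 2))
    (hρ : 0 ≤ ρ) (hρstar : 0 ≤ ρstar) (hη : 0 ≤ η) (hηR : 0 ≤ ηR)
    (hreduce : ρstar ^ 2 ≤ μ * ρ ^ 2)
    (heff : Ceff * η ^ 2 ≤ ρ ^ 2)
    (hdrel : ρ ^ 2 - 2 * ρstar ^ 2 ≤ 2 * CdRel * (ηR ^ 2 + γ⁻¹ * η ^ 2) + 2 * ηR ^ 2)
    (hRle : ηR ≤ η) :
    θ ^ 2 * η ^ 2 ≤ ηR ^ 2 :=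
  stmt_15_general Ceff CdRel γ θs θ μ ρ ρstar η ηR hCeff hCdRel hγ hθs hθspos hμ hreduce heff hdrel
end
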